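/- Let a, b be coprime positive integers, let r, p₀, q₀ be natural numbers with q₀ ≥ r·a, and let P ∈ ℂ[z] be a polynomial with natDegree P = r and P.coeff 0 ≠ 0. Define F := Σ_{j=0}^{r} (P.coeff j) · X^{p₀+j·b} Y^{q₀−j·a} ∈ ℂ[X,Y] (Mathlib: MvPolynomial (Fin 2) ℂ, with X := X 0 and Y := X 1). Then the following are equivalent: (i) for all x, y ∈ ℂ with x ≠ 0 and y ≠ 0, if F(x,y) = 0 then the two partial derivatives ∂F/∂X and ∂F/∂Y do not both vanish at (x,y); (ii) the univariate polynomial P is squarefree. (The paper's Proposition 7.13: a series is Newton non-degenerate along a compact face if and only if the associated univariate polynomial has simple roots.) -/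
import Mathlib


/-- The quasi-homogeneous polynomial `F = Σ_{j=0}^{r} (P.coeff j) · X^(p₀+j·b) Y^(q₀−j·a)`
associated to a univariate polynomial `P` and a compact face with direction `(b,−a)`. -/
noncomputable def facePoly (a b r p₀ q₀ : ℕ) (P : Polynomial ℂ) : MvPolynomial (Fin 2) ℂ :=
  ∑ j ∈ Finset.range (r + 1),
    MvPolynomial.monomial
      (Finsupp.single 0 (p₀ + j * b) + Finsupp.single 1 (q₀ - j * a)) (P.coeff j)

open Polynomial in
lemma newton_aux_squarefree_iff_simple (P : Polynomial ℂ) (hP : P ≠ 0) :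
    Squarefree P ↔ ∀ z : ℂ, P.eval z = 0 → P.derivative.eval z ≠ 0 := by
  constructor
  · intro hsq z hz hz'
    have hsep : P.Separable := PerfectField.separable_iff_squarefree.mpr hsq
    obtain ⟨u, v, huv⟩ := hsep
    have := congrArg (Polynomial.eval z) huv
    simp [hz, hz'] at this
  · intro h q hqq
    by_contra hqu
    have hq0 : q ≠ 0 := by rintro rfl; simp at hqq; exact hP hqq
    have hdq : 0 < q.degree := by
      rcases lt_or_eq_of_le (Polynomial.zero_le_degree_iff.mpr hq0) with h' | h'
      · exact h'
      · exact absurd (Polynomial.isUnit_iff_degree_eq_zero.mpr h'.symm) hqu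
    obtain ⟨z, hz⟩ := Complex.exists_root hdq
    have hdvd : (X - C z) ^ 2 ∣ P := by
      have h1 : (X - C z) ∣ q := dvd_iff_isRoot.mpr hz
      calc (X - C z) ^ 2 = (X - C z) * (X - C z) := sq _
        _ ∣ q * q := mul_dvd_mul h1 h1
        _ ∣ P := hqq
    obtain ⟨g, hg⟩ := hdvd
    refine h z ?_ ?_
    · simp [hg]
    · simp [hg, Polynomial.derivative_mul, Polynomial.derivative_pow]

lemma newton_aux_eval_mono (x y : ℂ) (m n : ℕ) (c : ℂ) :
    MvPolynomial.eval ![x, y] (MvPolynomial.monomial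
      (Finsupp.single 0 m + Finsupp.single 1 n) c) = c * (x ^ m * y ^ n) := by
  rw [MvPolynomial.eval_monomial, Finsupp.prod_add_index' (fun a => pow_zero _)
    (fun a b₁ b₂ => pow_add _ _ _)]
  simp [Finsupp.prod_single_index]

lemma newton_aux_sub_single0 (m n : ℕ) : (Finsupp.single (0 : Fin 2) m + Finsupp.single 1 n)
    - Finsupp.single 0 1 = Finsupp.single (0 : Fin 2) (m - 1) + Finsupp.single 1 n := by
  ext i; fin_cases i <;> simp [Finsupp.single_apply]

lemma newton_aux_sub_single1 (m n : ℕ) : (Finsupp.single (0 : Fin 2) m + Finsupp.single 1 n)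
    - Finsupp.single 1 1 = Finsupp.single (0 : Fin 2) m + Finsupp.single 1 (n - 1) := by
  ext i; fin_cases i <;> simp [Finsupp.single_apply]

lemma newton_aux_apply0 (m n : ℕ) :
    ((Finsupp.single (0 : Fin 2) m + Finsupp.single 1 n) : Fin 2 →₀ ℕ) 0 = m := by
  simp [Finsupp.single_apply]

lemma newton_aux_apply1 (m n : ℕ) :
    ((Finsupp.single (0 : Fin 2) m + Finsupp.single 1 n) : Fin 2 →₀ ℕ) 1 = n := by
  simp [Finsupp.single_apply]

lemma newton_aux_xpow (x : ℂ) (m : ℕ) : x * ((m : ℂ) * x ^ (m - 1)) = m * x ^ m := by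
  cases m with
  | zero => simp
  | succ k => rw [Nat.succ_sub_one, pow_succ]; ring

lemma newton_aux_eval_face (a b r p₀ q₀ : ℕ) (P : Polynomial ℂ) (x y : ℂ) :
    MvPolynomial.eval ![x, y] (facePoly a b r p₀ q₀ P)
      = ∑ j ∈ Finset.range (r + 1), P.coeff j * (x ^ (p₀ + j * b) * y ^ (q₀ - j * a)) := by
  rw [facePoly, map_sum]
  exact Finset.sum_congr rfl fun j _ => newton_aux_eval_mono x y _ _ _

lemma newton_aux_pd0_face (a b r p₀ q₀ : ℕ) (P : Polynomial ℂ) (x y : ℂ) :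
    x * MvPolynomial.eval ![x, y] (MvPolynomial.pderiv 0 (facePoly a b r p₀ q₀ P))
      = ∑ j ∈ Finset.range (r + 1),
          P.coeff j * ((p₀ + j * b : ℕ) : ℂ) * (x ^ (p₀ + j * b) * y ^ (q₀ - j * a)) := by
  rw [facePoly, map_sum, map_sum, Finset.mul_sum]
  refine Finset.sum_congr rfl fun j _ => ?_
  rw [MvPolynomial.pderiv_monomial, newton_aux_sub_single0, newton_aux_apply0,
    newton_aux_eval_mono]
  rw [show x * (P.coeff j * ((p₀ + j * b : ℕ) : ℂ) * (x ^ (p₀ + j * b - 1) * y ^ (q₀ - j * a)))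
      = (P.coeff j * y ^ (q₀ - j * a)) * (x * (((p₀ + j * b : ℕ) : ℂ) * x ^ (p₀ + j * b - 1)))
      from by ring, newton_aux_xpow]
  ring

lemma newton_aux_pd1_face (a b r p₀ q₀ : ℕ) (P : Polynomial ℂ) (x y : ℂ) :
    y * MvPolynomial.eval ![x, y] (MvPolynomial.pderiv 1 (facePoly a b r p₀ q₀ P))
      = ∑ j ∈ Finset.range (r + 1),
          P.coeff j * ((q₀ - j * a : ℕ) : ℂ) * (x ^ (p₀ + j * b) * y ^ (q₀ - j * a)) := by
  rw [facePoly, map_sum, map_sum, Finset.mul_sum]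
  refine Finset.sum_congr rfl fun j _ => ?_
  rw [MvPolynomial.pderiv_monomial, newton_aux_sub_single1, newton_aux_apply1,
    newton_aux_eval_mono]
  rw [show y * (P.coeff j * ((q₀ - j * a : ℕ) : ℂ) * (x ^ (p₀ + j * b) * y ^ (q₀ - j * a - 1)))
      = (P.coeff j * x ^ (p₀ + j * b)) * (y * (((q₀ - j * a : ℕ) : ℂ) * y ^ (q₀ - j * a - 1)))
      from by ring, newton_aux_xpow]
  ring

lemma newton_aux_deriv_sum_range (P : Polynomial ℂ) (t : ℂ) (n : ℕ) (hn : P.natDegree < n) :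
    t * P.derivative.eval t = ∑ j ∈ Finset.range n, (j : ℂ) * P.coeff j * t ^ j := by
  rw [Polynomial.derivative_eval, Polynomial.sum_over_range' P (by simp) n hn, Finset.mul_sum]
  refine Finset.sum_congr rfl fun j _ => ?_
  cases j with
  | zero => simp
  | succ k => rw [Nat.succ_sub_one, pow_succ]; push_cast; ring

lemma newton_aux_term_eq (a b r p₀ q₀ : ℕ) (hq : r * a ≤ q₀) (x y : ℂ) (hy : y ≠ 0)
    {j : ℕ} (hj : j ∈ Finset.range (r + 1)) :
    x ^ (p₀ + j * b) * y ^ (q₀ - j * a)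
      = (x ^ p₀ * y ^ q₀) * (x ^ b * (y⁻¹) ^ a) ^ j := by
  have hja : j * a ≤ q₀ :=
    le_trans (Nat.mul_le_mul_right a (Nat.lt_succ_iff.mp (Finset.mem_range.mp hj))) hq
  rw [pow_sub₀ y hy hja, pow_add x, mul_pow, ← pow_mul, ← pow_mul, inv_pow,
    mul_comm b j, mul_comm a j]
  ring

/-- The three torus identities. -/
lemma newton_aux_torus (a b r p₀ q₀ : ℕ) (hq : r * a ≤ q₀) (P : Polynomial ℂ)
    (hdeg : P.natDegree = r) (x y : ℂ) (hy : y ≠ 0) :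
    MvPolynomial.eval ![x, y] (facePoly a b r p₀ q₀ P)
        = (x ^ p₀ * y ^ q₀) * P.eval (x ^ b * (y⁻¹) ^ a) ∧
    x * MvPolynomial.eval ![x, y] (MvPolynomial.pderiv 0 (facePoly a b r p₀ q₀ P))
        = (x ^ p₀ * y ^ q₀) * ((p₀ : ℂ) * P.eval (x ^ b * (y⁻¹) ^ a)
            + (b : ℂ) * ((x ^ b * (y⁻¹) ^ a) * P.derivative.eval (x ^ b * (y⁻¹) ^ a))) ∧
    y * MvPolynomial.eval ![x, y] (MvPolynomial.pderiv 1 (facePoly a b r p₀ q₀ P))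
        = (x ^ p₀ * y ^ q₀) * ((q₀ : ℂ) * P.eval (x ^ b * (y⁻¹) ^ a)
            - (a : ℂ) * ((x ^ b * (y⁻¹) ^ a) * P.derivative.eval (x ^ b * (y⁻¹) ^ a))) := by
  set t : ℂ := x ^ b * (y⁻¹) ^ a with ht
  set K : ℂ := x ^ p₀ * y ^ q₀ with hK
  have hS0 : P.eval t = ∑ j ∈ Finset.range (r + 1), P.coeff j * t ^ j := by
    rw [Polynomial.eval_eq_sum_range' (n := r + 1) (by omega) t]
  have hS1 : t * P.derivative.eval t
      = ∑ j ∈ Finset.range (r + 1), (j : ℂ) * P.coeff j * t ^ j :=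
    newton_aux_deriv_sum_range P t (r + 1) (by omega)
  refine ⟨?_, ?_, ?_⟩
  · rw [newton_aux_eval_face, hS0, Finset.mul_sum]
    refine Finset.sum_congr rfl fun j hj => ?_
    rw [newton_aux_term_eq a b r p₀ q₀ hq x y hy hj]; ring
  · rw [newton_aux_pd0_face, hS0, hS1, mul_add, Finset.mul_sum, Finset.mul_sum,
      Finset.mul_sum, Finset.mul_sum, ← Finset.sum_add_distrib]
    refine Finset.sum_congr rfl fun j hj => ?_
    rw [newton_aux_term_eq a b r p₀ q₀ hq x y hy hj]
    push_cast; ring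
  · rw [newton_aux_pd1_face, hS0, hS1, mul_sub, Finset.mul_sum, Finset.mul_sum,
      Finset.mul_sum, Finset.mul_sum, ← Finset.sum_sub_distrib]
    refine Finset.sum_congr rfl fun j hj => ?_
    have hja : j * a ≤ q₀ :=
      le_trans (Nat.mul_le_mul_right a (Nat.lt_succ_iff.mp (Finset.mem_range.mp hj))) hq
    rw [newton_aux_term_eq a b r p₀ q₀ hq x y hy hj, Nat.cast_sub hja]
    push_cast; ring

/-- the quasi-homogeneous polynomial `F` defines a reduced (nonsingular) curve
in the torus `(ℂ*)²` — i.e. at every zero `(x,y)` of `F` with `x, y ≠ 0` at least one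
partial derivative of `F` is nonzero — if and only if the univariate face polynomial `P`
is squarefree. -/
theorem newton_nondegenerate_iff_squarefree (a b r p₀ q₀ : ℕ) (ha : 0 < a) (hb : 0 < b)
    (hab : Nat.Coprime a b) (hq : r * a ≤ q₀) (P : Polynomial ℂ)
    (hdeg : P.natDegree = r) (h0 : P.coeff 0 ≠ 0) :
    (∀ x y : ℂ, x ≠ 0 → y ≠ 0 → MvPolynomial.eval ![x, y] (facePoly a b r p₀ q₀ P) = 0 →
        ¬(MvPolynomial.eval ![x, y] (MvPolynomial.pderiv 0 (facePoly a b r p₀ q₀ P)) = 0 ∧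
          MvPolynomial.eval ![x, y] (MvPolynomial.pderiv 1 (facePoly a b r p₀ q₀ P)) = 0))
      ↔ Squarefree P := by
  have hPne : P ≠ 0 := fun h => h0 (by simp [h])
  constructor
  · intro H
    refine (newton_aux_squarefree_iff_simple P hPne).mpr ?_
    intro z hz hz'
    have hz0 : z ≠ 0 := by
      rintro rfl
      exact h0 (by simpa [Polynomial.coeff_zero_eq_eval_zero] using hz)
    obtain ⟨x, hxb⟩ := IsAlgClosed.exists_pow_nat_eq z hb
    have hx0 : x ≠ 0 := by rintro rfl; exact hz0 (by simpa [zero_pow hb.ne'] using hxb.symm)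
    obtain ⟨hE, hD0, hD1⟩ := newton_aux_torus a b r p₀ q₀ hq P hdeg x 1 one_ne_zero
    have ht : x ^ b * ((1 : ℂ)⁻¹) ^ a = z := by simp [hxb]
    rw [ht] at hE hD0 hD1
    refine H x 1 hx0 one_ne_zero (by rw [hE, hz, mul_zero]) ⟨?_, ?_⟩
    · have h1 : x * MvPolynomial.eval ![x, 1]
          (MvPolynomial.pderiv 0 (facePoly a b r p₀ q₀ P)) = 0 := by
        rw [hD0, hz, hz']; ring
      exact (mul_eq_zero.mp h1).resolve_left hx0
    · have h1 : (1 : ℂ) * MvPolynomial.eval ![x, 1]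
          (MvPolynomial.pderiv 1 (facePoly a b r p₀ q₀ P)) = 0 := by
        rw [hD1, hz, hz']; ring
      simpa using h1
  · rintro hsq x y hx hy hF ⟨hd0, hd1⟩
    obtain ⟨hE, hD0, hD1⟩ := newton_aux_torus a b r p₀ q₀ hq P hdeg x y hy
    set t : ℂ := x ^ b * (y⁻¹) ^ a with ht
    have ht0 : t ≠ 0 := mul_ne_zero (pow_ne_zero _ hx) (pow_ne_zero _ (inv_ne_zero hy))
    have hK : x ^ p₀ * y ^ q₀ ≠ 0 := mul_ne_zero (pow_ne_zero _ hx) (pow_ne_zero _ hy)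
    have hPt : P.eval t = 0 := by
      rw [hE] at hF; exact (mul_eq_zero.mp hF).resolve_left hK
    have hP't : P.derivative.eval t ≠ 0 :=
      (newton_aux_squarefree_iff_simple P hPne).mp hsq t hPt
    have h1 : x * MvPolynomial.eval ![x, y]
        (MvPolynomial.pderiv 0 (facePoly a b r p₀ q₀ P)) = 0 := by rw [hd0, mul_zero]
    rw [hD0, hPt] at h1
    have h2 : (x ^ p₀ * y ^ q₀) * ((b : ℂ) * (t * P.derivative.eval t)) = 0 := by
      rw [← h1]; ring
    rcases mul_eq_zero.mp h2 with h3 | h3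
    · exact hK h3
    · rcases mul_eq_zero.mp h3 with h4 | h4
      · exact (Nat.cast_ne_zero (R := ℂ)).mpr hb.ne' h4
      · rcases mul_eq_zero.mp h4 with h5 | h5
        · exact ht0 h5
        · exact hP't h5
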